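/- arXiv:1310.3569 — 8 statements merged into one kernel-verified Lean document; each statement's English description precedes it below -/
import Mathlib

section
/- Let k be a field of characteristic ≠ 2 containing an element ζ with ζ² = −1. Let R = k[x₁,y₁,x₂,y₂,x₃,y₃]/(yᵢ² − xᵢ(xᵢ²−1), i = 1,2,3), which is an integral domain, let K = Frac(R), and assume the images of all xᵢ, yᵢ are nonzero in K. Let g be the k-automorphism of K determined by g(xᵢ) = −xᵢ and g(yᵢ) = ζ·yᵢ for i = 1,2,3. Set b₂ = x₂/x₁, b₃ = x₃/x₁, a₂ = y₂/y₁, a₃ = y₃/y₁, u₁ = x₁², w₁ = y₁⁴, λ₁ = x₁y₁². Then the fixed field K^g = { f ∈ K : g(f) = f } equals the subfield L = k(b₂, b₃, a₂, a₃, u₁, w₁, λ₁) of K generated over k by b₂, b₃, a₂, a₃, u₁, w₁, λ₁. -/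
/-!
`g` fixes each generator of `L`, so `L ≤ K^g`. Since `g` multiplies every `xᵢ, yᵢ` by a fourth
root of unity and `g² y₁ = -y₁`, `g` has order `4`, and Artin's theorem gives `[K : K^g] = 4`.
On the other hand `x₁ = λ₁ / y₁²`, `xᵢ = bᵢ x₁`, `yᵢ = aᵢ y₁`, so `K = L(y₁)` with `y₁⁴ = w₁ ∈ L`,
whence `[K : L] ≤ 4` and `L = K^g`.
-/

open MvPolynomial

noncomputable section

/-- The ideal of `k[x₁,y₁,x₂,y₂,x₃,y₃]` generated by the three relations
`yᵢ² - xᵢ(xᵢ² - 1)`, `i = 1,2,3`.  Variables are indexed so that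
`x₁ = X 0`, `y₁ = X 1`, `x₂ = X 2`, `y₂ = X 3`, `x₃ = X 4`, `y₃ = X 5`. -/
def uenoIdeal (k : Type*) [Field k] : Ideal (MvPolynomial (Fin 6) k) :=
  Ideal.span { X 1 ^ 2 - X 0 * (X 0 ^ 2 - 1),
               X 3 ^ 2 - X 2 * (X 2 ^ 2 - 1),
               X 5 ^ 2 - X 4 * (X 4 ^ 2 - 1) }

variable (k : Type*) [Field k] [(uenoIdeal k).IsPrime]

/-- `R = k[x₁,y₁,x₂,y₂,x₃,y₃]/(yᵢ² - xᵢ(xᵢ² - 1), i = 1,2,3)`, the affine coordinate ring of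
`Z = C₁ × C₂ × C₃`; it is an integral domain (the defining ideal being prime). -/
abbrev UenoRing : Type _ := MvPolynomial (Fin 6) k ⧸ uenoIdeal k

/-- `K = Frac(R) = k(Z)`, the function field of `Z = C₁ × C₂ × C₃`. -/
abbrev UenoField : Type _ := FractionRing (UenoRing k)

/-- The image in `K = Frac(R)` of the `i`-th variable. -/
def xv (i : Fin 6) : UenoField k :=
  algebraMap (UenoRing k) (UenoField k) (Ideal.Quotient.mk (uenoIdeal k) (X i))

/-- `x₁` as an element of `K`. -/ def x1 : UenoField k := xv k 0
/-- `y₁` as an element of `K`. -/ def y1 : UenoField k := xv k 1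
/-- `x₂` as an element of `K`. -/ def x2 : UenoField k := xv k 2
/-- `y₂` as an element of `K`. -/ def y2 : UenoField k := xv k 3
/-- `x₃` as an element of `K`. -/ def x3 : UenoField k := xv k 4
/-- `y₃` as an element of `K`. -/ def y3 : UenoField k := xv k 5

/-- `b₂ = x₂/x₁`. -/ def b2 : UenoField k := x2 k / x1 k
/-- `b₃ = x₃/x₁`. -/ def b3 : UenoField k := x3 k / x1 k
/-- `a₂ = y₂/y₁`. -/ def a2 : UenoField k := y2 k / y1 k
/-- `a₃ = y₃/y₁`. -/ def a3 : UenoField k := y3 k / y1 k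

open IntermediateField

section FixedField

variable {F E : Type*} [Field F] [Field E] [Algebra F E]

theorem AlgEquiv.pow_apply_of_apply_eq_algebraMap_mul (g : E ≃ₐ[F] E) {z : E} {c : F}
    (h : g z = algebraMap F E c * z) (n : ℕ) : (g ^ n) z = algebraMap F E (c ^ n) * z := by
  induction n with
  | zero => simp
  | succ n ih =>
    rw [pow_succ, AlgEquiv.mul_apply, h, map_mul, AlgEquiv.commutes, ih, pow_succ, map_mul]
    ring

theorem IntermediateField.mem_fixedField_zpowers_iff (g : E ≃ₐ[F] E) (z : E) :
    z ∈ fixedField (Subgroup.zpowers g) ↔ g z = z := by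
  refine ⟨fun h ↦ h ⟨g, Subgroup.mem_zpowers g⟩, fun h ↦ ?_⟩
  have : Subgroup.zpowers g ≤ MulAction.stabilizer (E ≃ₐ[F] E) z :=
    Subgroup.zpowers_le.mpr h
  exact fun σ ↦ this σ.2

theorem AlgEquiv.eq_one_of_adjoin_eq_top (g : E ≃ₐ[F] E) {S : Set E} (hS : adjoin F S = ⊤)
    (h : ∀ s ∈ S, g s = s) : g = 1 := by
  have htop : ⊤ ≤ fixedField (Subgroup.zpowers g) := hS ▸ adjoin_le_iff.mpr
    fun s hs ↦ (mem_fixedField_zpowers_iff g s).mpr (h s hs)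
  ext z
  exact (mem_fixedField_zpowers_iff g z).mp (htop trivial)

theorem AlgEquiv.pow_eq_one_of_adjoin_eq_top (g : E ≃ₐ[F] E) {S : Set E} (hS : adjoin F S = ⊤)
    {n : ℕ} (h : ∀ s ∈ S, ∃ c : F, c ^ n = 1 ∧ g s = algebraMap F E c * s) : g ^ n = 1 :=
  eq_one_of_adjoin_eq_top _ hS fun s hs ↦ by
    obtain ⟨c, hc, hgs⟩ := h s hs
    rw [pow_apply_of_apply_eq_algebraMap_mul g hgs, hc, map_one, one_mul]

theorem IntermediateField.finrank_fixedField_zpowers (g : E ≃ₐ[F] E) (hg : IsOfFinOrder g) :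
    Module.finrank (fixedField (Subgroup.zpowers g)) E = orderOf g := by
  have : Finite (Subgroup.zpowers g) := hg.finite_zpowers
  have : Fintype (Subgroup.zpowers g) := Fintype.ofFinite _
  rw [← Nat.card_zpowers, Nat.card_eq_fintype_card]
  exact FixedPoints.finrank_eq_card (Subgroup.zpowers g) E

theorem IntermediateField.eq_fixedField_zpowers_of_le_of_finrank_le {L : IntermediateField F E}
    [FiniteDimensional L E] {g : E ≃ₐ[F] E} (hg : IsOfFinOrder g)
    (hle : L ≤ fixedField (Subgroup.zpowers g)) (hfr : Module.finrank L E ≤ orderOf g) :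
    L = fixedField (Subgroup.zpowers g) :=
  eq_of_le_of_finrank_le' hle (by rwa [finrank_fixedField_zpowers g hg])

end FixedField

section AdjoinSimple

variable {K E : Type*} [Field K] [Field E] [Algebra K E] {y : E}

theorem IntermediateField.finiteDimensional_of_adjoin_simple_eq_top (htop : K⟮y⟯ = ⊤) {n : ℕ}
    (hn : n ≠ 0) {c : K} (hy : y ^ n = algebraMap K E c) : FiniteDimensional K E := by
  have := adjoin.finiteDimensional (.of_pow (Nat.pos_of_ne_zero hn) (hy ▸ isIntegral_algebraMap))
  rw [htop] at this
  exact topEquiv.toLinearEquiv.finiteDimensional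

theorem IntermediateField.finrank_le_of_adjoin_simple_eq_top (htop : K⟮y⟯ = ⊤) {n : ℕ}
    (hn : n ≠ 0) {c : K} (hy : y ^ n = algebraMap K E c) : Module.finrank K E ≤ n := by
  have hroot : Polynomial.aeval y (Polynomial.X ^ n - Polynomial.C c) = 0 := by simp [hy]
  have hint : IsIntegral K y := .of_pow (Nat.pos_of_ne_zero hn) (hy ▸ isIntegral_algebraMap)
  calc Module.finrank K E = Module.finrank K K⟮y⟯ := by rw [htop, finrank_top']
    _ = (minpoly K y).natDegree := adjoin.finrank hint
    _ ≤ (Polynomial.X ^ n - Polynomial.C c).natDegree :=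
      Polynomial.natDegree_le_natDegree (minpoly.min K y (Polynomial.monic_X_pow_sub_C c hn) hroot)
    _ = n := Polynomial.natDegree_X_pow_sub_C

end AdjoinSimple

theorem adjoin_range_xv_eq_top : adjoin k (Set.range (xv k)) = ⊤ := by
  have hR : ∀ r : UenoRing k,
      algebraMap (UenoRing k) (UenoField k) r ∈ adjoin k (Set.range (xv k)) := by
    intro r
    obtain ⟨p, rfl⟩ := Ideal.Quotient.mk_surjective r
    induction p using MvPolynomial.induction_on with
    | C a => exact IntermediateField.algebraMap_mem _ a
    | add p q hp hq => simpa only [map_add] using add_mem hp hq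
    | mul_X p i hp =>
      rw [map_mul, map_mul]
      exact mul_mem hp (subset_adjoin k _ ⟨i, rfl⟩)
  refine eq_top_iff.mpr fun z _ ↦ ?_
  obtain ⟨a, b, -, rfl⟩ := IsFractionRing.div_surjective (A := UenoRing k) z
  exact div_mem (hR a) (hR b)

def uenoL : IntermediateField k (UenoField k) :=
  adjoin k {b2 k, b3 k, a2 k, a3 k, x1 k ^ 2, y1 k ^ 4, x1 k * y1 k ^ 2}

theorem adjoin_uenoL_y1_eq_top (hx1 : x1 k ≠ 0) (hy1 : y1 k ≠ 0) :
    adjoin (uenoL k) {y1 k} = ⊤ := by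
  set M := adjoin (uenoL k) {y1 k}
  have hL : ∀ w ∈ ({b2 k, b3 k, a2 k, a3 k, x1 k ^ 2, y1 k ^ 4, x1 k * y1 k ^ 2} : Set _),
      w ∈ M := fun w hw ↦ M.algebraMap_mem ⟨w, subset_adjoin k _ hw⟩
  have hy1M : y1 k ∈ M := mem_adjoin_simple_self _ _
  have hx1M : x1 k ∈ M := by
    rw [show x1 k = x1 k * y1 k ^ 2 / y1 k ^ 2 by field_simp]
    exact div_mem (hL _ (by simp)) (pow_mem hy1M 2)
  have hM_of_div {u v : UenoField k} (hv : v ≠ 0) (huv : u / v ∈ M) (hvM : v ∈ M) : u ∈ M := by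
    simpa only [div_mul_cancel₀ u hv] using mul_mem huv hvM
  refine eq_top_iff.mpr <| (adjoin_eq_top_of_adjoin_eq_top k (adjoin_range_xv_eq_top k)).ge.trans
    (adjoin_le_iff.mpr ?_)
  rintro _ ⟨i, rfl⟩
  fin_cases i
  exacts [hx1M, hy1M, hM_of_div hx1 (hL (b2 k) (by simp)) hx1M,
    hM_of_div hy1 (hL (a2 k) (by simp)) hy1M, hM_of_div hx1 (hL (b3 k) (by simp)) hx1M,
    hM_of_div hy1 (hL (a3 k) (by simp)) hy1M]

theorem uenoL_le_fixedField {ζ : k} (hζ : ζ ^ 2 = -1) (g : UenoField k ≃ₐ[k] UenoField k)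
    (hgx1 : g (x1 k) = -x1 k) (hgx2 : g (x2 k) = -x2 k) (hgx3 : g (x3 k) = -x3 k)
    (hgy1 : g (y1 k) = algebraMap k (UenoField k) ζ * y1 k)
    (hgy2 : g (y2 k) = algebraMap k (UenoField k) ζ * y2 k)
    (hgy3 : g (y3 k) = algebraMap k (UenoField k) ζ * y3 k) :
    uenoL k ≤ fixedField (Subgroup.zpowers g) := by
  have hζK : (algebraMap k (UenoField k) ζ) ^ 2 = -1 := by rw [← map_pow, hζ, map_neg, map_one]
  have hζ0 : algebraMap k (UenoField k) ζ ≠ 0 := fun h ↦ by simp [h] at hζK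
  refine adjoin_le_iff.mpr fun s hs ↦ (mem_fixedField_zpowers_iff g s).mpr ?_
  rcases hs with rfl | rfl | rfl | rfl | rfl | rfl | rfl
  · rw [b2, map_div₀, hgx2, hgx1, neg_div_neg_eq]
  · rw [b3, map_div₀, hgx3, hgx1, neg_div_neg_eq]
  · rw [a2, map_div₀, hgy2, hgy1, mul_div_mul_left _ _ hζ0]
  · rw [a3, map_div₀, hgy3, hgy1, mul_div_mul_left _ _ hζ0]
  · rw [map_pow, hgx1, neg_sq]
  · rw [map_pow, hgy1, mul_pow, show 4 = 2 * 2 from rfl, pow_mul, hζK]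
    ring
  · rw [map_mul, map_pow, hgx1, hgy1, mul_pow, hζK]
    ring

theorem orderOf_eq_four_of_apply_xv (h2 : (2 : k) ≠ 0) {ζ : k} (hζ : ζ ^ 2 = -1) (hy1 : y1 k ≠ 0)
    (g : UenoField k ≃ₐ[k] UenoField k)
    (hgx1 : g (x1 k) = -x1 k) (hgx2 : g (x2 k) = -x2 k) (hgx3 : g (x3 k) = -x3 k)
    (hgy1 : g (y1 k) = algebraMap k (UenoField k) ζ * y1 k)
    (hgy2 : g (y2 k) = algebraMap k (UenoField k) ζ * y2 k)
    (hgy3 : g (y3 k) = algebraMap k (UenoField k) ζ * y3 k) :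
    orderOf g = 4 := by
  have hζ4 : ζ ^ 4 = 1 := by rw [show 4 = 2 * 2 from rfl, pow_mul, hζ]; norm_num
  have hneg {z : UenoField k} (h : g z = -z) : g z = algebraMap k _ (-1) * z := by
    rw [h, map_neg, map_one, neg_one_mul]
  have hg4 : g ^ 4 = 1 := g.pow_eq_one_of_adjoin_eq_top (adjoin_range_xv_eq_top k) <| by
    rintro _ ⟨i, rfl⟩
    fin_cases i
    exacts [⟨-1, by norm_num, hneg hgx1⟩, ⟨ζ, hζ4, hgy1⟩, ⟨-1, by norm_num, hneg hgx2⟩,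
      ⟨ζ, hζ4, hgy2⟩, ⟨-1, by norm_num, hneg hgx3⟩, ⟨ζ, hζ4, hgy3⟩]
  have hg2 : g ^ 2 ≠ 1 := fun h ↦ by
    have h2y1 := g.pow_apply_of_apply_eq_algebraMap_mul hgy1 2
    rw [h, hζ, AlgEquiv.one_apply, map_neg, map_one, neg_one_mul, eq_neg_iff_add_eq_zero,
      ← two_mul] at h2y1
    refine mul_ne_zero ?_ hy1 h2y1
    rw [← map_ofNat (algebraMap k (UenoField k)) 2]
    exact (map_ne_zero _).mpr h2
  exact orderOf_eq_prime_pow (p := 2) (n := 1) hg2 hg4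

/-- **Lemma 2.1**: let `g` be the `k`-automorphism of `K = k(Z)` with `g(xᵢ) = -xᵢ`,
`g(yᵢ) = ζyᵢ` (`ζ² = -1`).  Then the fixed field `K^g` equals the subfield
`L = k(b₂, b₃, a₂, a₃, u₁, w₁, λ₁)` generated over `k` by `b₂ = x₂/x₁`, `b₃ = x₃/x₁`,
`a₂ = y₂/y₁`, `a₃ = y₃/y₁`, `u₁ = x₁²`, `w₁ = y₁⁴`, `λ₁ = x₁y₁²`. -/
theorem fixed_field_eq_L (h2 : (2 : k) ≠ 0) (ζ : k) (hζ : ζ ^ 2 = -1)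
    (hne : ∀ i : Fin 6, xv k i ≠ 0)
    (g : UenoField k ≃ₐ[k] UenoField k)
    (hgx1 : g (x1 k) = -x1 k) (hgx2 : g (x2 k) = -x2 k) (hgx3 : g (x3 k) = -x3 k)
    (hgy1 : g (y1 k) = algebraMap k (UenoField k) ζ * y1 k)
    (hgy2 : g (y2 k) = algebraMap k (UenoField k) ζ * y2 k)
    (hgy3 : g (y3 k) = algebraMap k (UenoField k) ζ * y3 k) :
    ∀ f : UenoField k,
      g f = f ↔
        f ∈ IntermediateField.adjoin k
          ({b2 k, b3 k, a2 k, a3 k, x1 k ^ 2, y1 k ^ 4, x1 k * y1 k ^ 2} :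
            Set (UenoField k)) := by
  have horder := orderOf_eq_four_of_apply_xv k h2 hζ (hne 1) g hgx1 hgx2 hgx3 hgy1 hgy2 hgy3
  have htop := adjoin_uenoL_y1_eq_top k (hne 0) (hne 1)
  have hw : y1 k ^ 4 = algebraMap (uenoL k) _ ⟨y1 k ^ 4, subset_adjoin k _ (by simp)⟩ := rfl
  have := finiteDimensional_of_adjoin_simple_eq_top htop four_ne_zero hw
  have hL := eq_fixedField_zpowers_of_le_of_finrank_le
    (orderOf_pos_iff.mp (horder ▸ four_pos))
    (uenoL_le_fixedField k hζ g hgx1 hgx2 hgx3 hgy1 hgy2 hgy3)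
    (horder ▸ finrank_le_of_adjoin_simple_eq_top htop four_ne_zero hw)
  intro f
  rw [← mem_fixedField_zpowers_iff, ← hL]
  rfl
end
end

section
/- Let k be a field of characteristic ≠ 2. Let R = k[x₁,y₁,x₂,y₂,x₃,y₃]/(yᵢ² − xᵢ(xᵢ²−1), i = 1,2,3), an integral domain, let K = Frac(R), and assume the images of all xᵢ, yᵢ are nonzero in K. Set bⱼ = xⱼ/x₁ and aⱼ = yⱼ/y₁ for j = 2,3. Then for each j ∈ {2,3}, one has aⱼ² − bⱼ ≠ 0 in K. -/
open MvPolynomial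

noncomputable section

variable (k : Type*) [Field k] [(uenoIdeal k).IsPrime]

/- On `Z` one has `aⱼ² - bⱼ = (xⱼ/x₁)·((xⱼ² - 1)/(x₁² - 1) - 1)`. The factors `x₁² - 1` and
`xⱼ² - x₁²` are nonzero in `K` because they do not vanish at the point `(0,0,-1,0,-1,0)` of `Z`. -/

section

variable {F : Type*} [Field F]

theorem div_sq_sub_div_eq_of_sq_eq {x₁ y₁ x y : F} (h₁ : y₁ ^ 2 = x₁ * (x₁ ^ 2 - 1))
    (h : y ^ 2 = x * (x ^ 2 - 1)) (hx₁ : x₁ ≠ 0) (hd : x₁ ^ 2 - 1 ≠ 0) :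
    (y / y₁) ^ 2 - x / x₁ = x / x₁ * ((x ^ 2 - 1) / (x₁ ^ 2 - 1) - 1) := by
  rw [div_pow, h₁, h]
  field_simp

theorem div_sq_sub_div_ne_zero_of_sq_eq {x₁ y₁ x y : F} (h₁ : y₁ ^ 2 = x₁ * (x₁ ^ 2 - 1))
    (h : y ^ 2 = x * (x ^ 2 - 1)) (hx₁ : x₁ ≠ 0) (hd : x₁ ^ 2 - 1 ≠ 0) (hx : x ≠ 0)
    (hxx₁ : x ^ 2 ≠ x₁ ^ 2) :
    (y / y₁) ^ 2 - x / x₁ ≠ 0 := by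
  rw [div_sq_sub_div_eq_of_sq_eq h₁ h hx₁ hd, div_sub_one hd, sub_sub_sub_cancel_right]
  exact mul_ne_zero (div_ne_zero hx hx₁) (div_ne_zero (sub_ne_zero.2 hxx₁) hd)

theorem uenoIdeal_le_ker_eval {p : Fin 6 → F} (h₁ : p 1 ^ 2 = p 0 * (p 0 ^ 2 - 1))
    (h₂ : p 3 ^ 2 = p 2 * (p 2 ^ 2 - 1)) (h₃ : p 5 ^ 2 = p 4 * (p 4 ^ 2 - 1)) :
    uenoIdeal F ≤ RingHom.ker (eval p) := by
  rw [uenoIdeal, Ideal.span_le]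
  rintro f (rfl | rfl | rfl) <;> simp [h₁, h₂, h₃]

def toUenoField : MvPolynomial (Fin 6) F →+* UenoField F :=
  (algebraMap (UenoRing F) (UenoField F)).comp (Ideal.Quotient.mk (uenoIdeal F))

@[simp]
theorem toUenoField_X (i : Fin 6) : toUenoField (X i) = xv F i := rfl

theorem toUenoField_eq_zero_of_mem {f : MvPolynomial (Fin 6) F} (hf : f ∈ uenoIdeal F) :
    toUenoField f = 0 := by
  rw [toUenoField, RingHom.comp_apply, Ideal.Quotient.eq_zero_iff_mem.2 hf, map_zero]

theorem toUenoField_ne_zero_of_eval_ne_zero {p : Fin 6 → F}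
    (hp : uenoIdeal F ≤ RingHom.ker (eval p)) {f : MvPolynomial (Fin 6) F} (hf : eval p f ≠ 0) :
    toUenoField f ≠ 0 := by
  rw [toUenoField, RingHom.comp_apply,
    (IsFractionRing.injective (UenoRing F) (UenoField F)).ne_iff' (map_zero _), Ne,
    Ideal.Quotient.eq_zero_iff_mem]
  exact fun hmem => hf (hp hmem)

theorem xv_sq_eq {i j : Fin 6} (hmem : X j ^ 2 - X i * (X i ^ 2 - 1) ∈ uenoIdeal F) :
    xv F j ^ 2 = xv F i * (xv F i ^ 2 - 1) := by
  simpa [sub_eq_zero] using toUenoField_eq_zero_of_mem hmem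

theorem uenoIdeal_le_ker_eval_basePoint :
    uenoIdeal F ≤ RingHom.ker (eval ![(0 : F), 0, -1, 0, -1, 0]) :=
  uenoIdeal_le_ker_eval (by simp) (by simp) (by simp)

theorem x1_sq_sub_one_ne_zero : x1 F ^ 2 - 1 ≠ 0 := by
  have h := toUenoField_ne_zero_of_eval_ne_zero (uenoIdeal_le_ker_eval_basePoint (F := F))
    (f := X 0 ^ 2 - 1) (by simp)
  rwa [map_sub, map_pow, map_one, toUenoField_X] at h

theorem xv_sq_ne_x1_sq {i : Fin 6} (hi : i = 2 ∨ i = 4) : xv F i ^ 2 ≠ x1 F ^ 2 := by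
  have h := toUenoField_ne_zero_of_eval_ne_zero (uenoIdeal_le_ker_eval_basePoint (F := F))
    (f := X i ^ 2 - X 0 ^ 2) (by rcases hi with rfl | rfl <;> simp)
  rwa [map_sub, map_pow, map_pow, toUenoField_X, toUenoField_X, sub_ne_zero] at h

end

theorem a_sq_sub_b_ne_zero
    (hne : ∀ i : Fin 6, xv k i ≠ 0) :
    a2 k ^ 2 - b2 k ≠ 0 ∧ a3 k ^ 2 - b3 k ≠ 0 := by
  have rel₁ : y1 k ^ 2 = x1 k * (x1 k ^ 2 - 1) := xv_sq_eq (Ideal.subset_span (by simp))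
  have rel₂ : y2 k ^ 2 = x2 k * (x2 k ^ 2 - 1) := xv_sq_eq (Ideal.subset_span (by simp))
  have rel₃ : y3 k ^ 2 = x3 k * (x3 k ^ 2 - 1) := xv_sq_eq (Ideal.subset_span (by simp))
  exact ⟨div_sq_sub_div_ne_zero_of_sq_eq rel₁ rel₂ (hne 0) x1_sq_sub_one_ne_zero (hne 2)
      (xv_sq_ne_x1_sq (.inl rfl)),
    div_sq_sub_div_ne_zero_of_sq_eq rel₁ rel₃ (hne 0) x1_sq_sub_one_ne_zero (hne 4)
      (xv_sq_ne_x1_sq (.inr rfl))⟩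
end
end

section
/- Let k be a field of characteristic ≠ 2. Let R = k[x₁,y₁,x₂,y₂,x₃,y₃]/(yᵢ² − xᵢ(xᵢ²−1), i = 1,2,3), an integral domain, let K = Frac(R), and assume the images of all xᵢ, yᵢ are nonzero in K. Set bⱼ = xⱼ/x₁, aⱼ = yⱼ/y₁ for j = 2,3. Then the relation (a₂² − b₂)(a₃² − b₃³) = (a₃² − b₃)(a₂² − b₂³) holds in K, or equivalently a₂²·b₃·(1 − b₃²) = a₃²·b₂·(1 − b₂²) + b₂·b₃·(b₂² − b₃²). -/
/-! On `y² = x³ - x`, for points `(x₁, y₁)` and `(x, y)` with `y₁ ≠ 0`, the ratios `a = y/y₁`,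
`b = x/x₁` satisfy `a² - b = x₁²(a² - b³)`, with the factor `x₁²` independent of the second point.
Applying this to `j = 2, 3` and cross-multiplying gives (XII); (XIII) is (XII) expanded. -/

open MvPolynomial

noncomputable section

variable (k : Type*) [Field k] [(uenoIdeal k).IsPrime]

theorem sq_sub_eq_sq_mul_sq_sub_pow_three {F : Type*} [Field F] {x y x' y' : F}
    (hy : y ≠ 0) (hxy : y ^ 2 = x ^ 3 - x) (hxy' : y' ^ 2 = x' ^ 3 - x') :
    (y' / y) ^ 2 - x' / x = x ^ 2 * ((y' / y) ^ 2 - (x' / x) ^ 3) := by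
  have hx : x ≠ 0 := by rintro rfl; simp_all
  have hx2 : x ^ 2 - 1 ≠ 0 := by
    intro h; apply hy; apply pow_eq_zero_iff two_ne_zero |>.mp; linear_combination hxy + x * h
  rw [div_pow, hxy, hxy']
  field_simp
  ring

theorem xv_sq_eq_of_mem (k : Type*) [Field k] {p q : Fin 6}
    (h : X q ^ 2 - X p * (X p ^ 2 - 1) ∈ uenoIdeal k) :
    xv k q ^ 2 = xv k p ^ 3 - xv k p := by
  have h0 : algebraMap (UenoRing k) (UenoField k)
      (Ideal.Quotient.mk (uenoIdeal k) (X q ^ 2 - X p * (X p ^ 2 - 1))) = 0 := by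
    rw [Ideal.Quotient.eq_zero_iff_mem.2 h, map_zero]
  simp only [map_sub, map_mul, map_pow, map_one] at h0
  unfold xv
  linear_combination h0

set_option synthInstance.maxHeartbeats 1000000 in
theorem hypersurface_relation (hne : ∀ i : Fin 6, xv k i ≠ 0) :
    (a2 k ^ 2 - b2 k) * (a3 k ^ 2 - b3 k ^ 3) =
      (a3 k ^ 2 - b3 k) * (a2 k ^ 2 - b2 k ^ 3) ∧
    a2 k ^ 2 * b3 k * (1 - b3 k ^ 2) =
      a3 k ^ 2 * b2 k * (1 - b2 k ^ 2) + b2 k * b3 k * (b2 k ^ 2 - b3 k ^ 2) := by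
  have curve₁ := xv_sq_eq_of_mem k (p := 0) (q := 1) (Ideal.subset_span (by simp))
  have curve₂ := xv_sq_eq_of_mem k (p := 2) (q := 3) (Ideal.subset_span (by simp))
  have curve₃ := xv_sq_eq_of_mem k (p := 4) (q := 5) (Ideal.subset_span (by simp))
  have rel₂ : a2 k ^ 2 - b2 k = x1 k ^ 2 * (a2 k ^ 2 - b2 k ^ 3) :=
    sq_sub_eq_sq_mul_sq_sub_pow_three (hne 1) curve₁ curve₂
  have rel₃ : a3 k ^ 2 - b3 k = x1 k ^ 2 * (a3 k ^ 2 - b3 k ^ 3) :=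
    sq_sub_eq_sq_mul_sq_sub_pow_three (hne 1) curve₁ curve₃
  have xii : (a2 k ^ 2 - b2 k) * (a3 k ^ 2 - b3 k ^ 3) =
      (a3 k ^ 2 - b3 k) * (a2 k ^ 2 - b2 k ^ 3) := by
    rw [rel₂, rel₃]; ring
  exact ⟨xii, by linear_combination xii⟩
end
end

section
/- Let k be a field of characteristic ≠ 2. Let R = k[x₁,y₁,x₂,y₂,x₃,y₃]/(yᵢ² − xᵢ(xᵢ²−1), i = 1,2,3), an integral domain, let K = Frac(R), and assume the images of all xᵢ, yᵢ are nonzero in K. Set b₂ = x₂/x₁, b₃ = x₃/x₁, a₃ = y₃/y₁. Then the three elements a₃, b₂, b₃ of K are algebraically independent over k. -/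
/-
The specialization argument: a point of `Z` with coordinates in a field `L`, at which `x₁` and
`y₁` do not vanish, defines a `k`-algebra map from the local ring of `Z` at that point to `L`,
and algebraic independence of the values of `a₃, b₂, b₃` there lifts to the local ring and
hence to `K`. Over an algebraically closed field containing three algebraically independent
elements `α, β, γ`, one finds such a point with `(a₃, b₂, b₃) = (α, β, γ)`: put
`x₂ = β x₁`, `x₃ = γ x₁`, `y₃ = α y₁`; the equation of `C₃` then reduces to
`x₁² (γ³ - α²) = γ - α²`, and `y₁`, `y₂` are square roots.
-/

open MvPolynomial

noncomputable section

variable (k : Type*) [Field k] [(uenoIdeal k).IsPrime]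

theorem algebraicIndependent_div_of_algHom {k R K L ι : Type*} [Field k] [CommRing R]
    [IsDomain R] [Algebra k R] [Field K] [Algebra R K] [IsFractionRing R K] [Algebra k K]
    [IsScalarTower k R K] [Field L] [Algebra k L] (φ : R →ₐ[k] L) (n d : ι → R)
    (hd : ∀ i, φ (d i) ≠ 0) (h : AlgebraicIndependent k fun i ↦ φ (n i) / φ (d i)) :
    AlgebraicIndependent k fun i ↦ algebraMap R K (n i) / algebraMap R K (d i) := by
  let P := RingHom.ker φ
  have : P.IsPrime := RingHom.ker_isPrime φ
  let A := Localization.AtPrime P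
  have hP : P.primeCompl ≤ nonZeroDivisors R := fun r hr ↦
    mem_nonZeroDivisors_of_ne_zero fun h0 ↦ hr (h0 ▸ P.zero_mem)
  let ψ : A →ₐ[k] L := IsLocalization.liftAlgHom (M := P.primeCompl) (f := φ)
    fun r ↦ isUnit_iff_ne_zero.2 r.2
  let χ : A →ₐ[k] K := (Localization.mapToFractionRing K P.primeCompl A hP).restrictScalars k
  have hχ : Function.Injective χ := (IsLocalization.lift_injective_iff _).2 fun x y ↦
    ⟨fun h ↦ congr_arg _ (IsLocalization.injective A hP h),
      fun h ↦ congr_arg _ (IsFractionRing.injective R K h)⟩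
  let e : ι → A := fun i ↦ IsLocalization.mk' A (n i) (⟨d i, hd i⟩ : P.primeCompl)
  have hψe : ψ ∘ e = fun i ↦ φ (n i) / φ (d i) := funext fun i ↦
    (IsLocalization.lift_mk'_spec _ _ _ _).2 (mul_div_cancel₀ _ (hd i)).symm
  have hχe : χ ∘ e = fun i ↦ algebraMap R K (n i) / algebraMap R K (d i) := funext fun i ↦
    (IsLocalization.lift_mk'_spec _ _ _ _).2 (mul_div_cancel₀ _
      (IsFractionRing.to_map_ne_zero_of_mem_nonZeroDivisors (hP (hd i)))).symm
  rw [← hχe]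
  exact (AlgebraicIndependent.of_comp ψ (hψe ▸ h)).map' hχ

theorem aeval_eq_zero_of_mem_uenoIdeal (k : Type*) [Field k] {L : Type*} [CommRing L]
    [Algebra k L] (P : Fin 6 → L) (h₁ : P 1 ^ 2 = P 0 * (P 0 ^ 2 - 1))
    (h₂ : P 3 ^ 2 = P 2 * (P 2 ^ 2 - 1)) (h₃ : P 5 ^ 2 = P 4 * (P 4 ^ 2 - 1)) :
    ∀ f ∈ uenoIdeal k, aeval P f = 0 := by
  intro f hf
  refine Ideal.span_le (I := RingHom.ker (aeval P)).2 ?_ hf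
  rintro f (rfl | rfl | rfl) <;> simp [*]

theorem exists_point_with_ratios (k : Type*) [Field k] {L : Type*} [Field L] [IsAlgClosed L]
    [Algebra k L] {α β γ : L} (hγα : γ - α ^ 2 ≠ 0) (hγ₃α : γ ^ 3 - α ^ 2 ≠ 0)
    (hγ : γ - γ ^ 3 ≠ 0) :
    ∃ P : Fin 6 → L, (∀ f ∈ uenoIdeal k, aeval P f = 0) ∧ P 0 ≠ 0 ∧ P 1 ≠ 0 ∧
      P 5 / P 1 = α ∧ P 2 / P 0 = β ∧ P 4 / P 0 = γ := by
  obtain ⟨x₁, hx₁⟩ := IsAlgClosed.exists_pow_nat_eq ((γ - α ^ 2) / (γ ^ 3 - α ^ 2)) two_pos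
  obtain ⟨y₁, hy₁⟩ := IsAlgClosed.exists_pow_nat_eq (x₁ * (x₁ ^ 2 - 1)) two_pos
  obtain ⟨y₂, hy₂⟩ := IsAlgClosed.exists_pow_nat_eq (β * x₁ * ((β * x₁) ^ 2 - 1)) two_pos
  have hx₁0 : x₁ ≠ 0 := by
    rintro rfl
    exact div_ne_zero hγα hγ₃α (by simpa using hx₁.symm)
  have hx₁1 : x₁ ^ 2 - 1 ≠ 0 := by
    rw [hx₁, div_sub_one hγ₃α]
    exact div_ne_zero (by convert hγ using 1; ring) hγ₃α
  have hy₁0 : y₁ ≠ 0 := by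
    rintro rfl
    exact mul_ne_zero hx₁0 hx₁1 (by simpa using hy₁.symm)
  have hC₃ : (α * y₁) ^ 2 = γ * x₁ * ((γ * x₁) ^ 2 - 1) := by
    have hx₁' : x₁ ^ 2 * (γ ^ 3 - α ^ 2) = γ - α ^ 2 := by rw [hx₁, div_mul_cancel₀ _ hγ₃α]
    linear_combination α ^ 2 * hy₁ - x₁ * hx₁'
  refine ⟨![x₁, y₁, β * x₁, y₂, γ * x₁, α * y₁],
    aeval_eq_zero_of_mem_uenoIdeal k _ hy₁ hy₂ hC₃, hx₁0, hy₁0, ?_, ?_, ?_⟩ <;>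
    simp [hx₁0, hy₁0]

theorem AlgebraicIndependent.ratio_nondegenerate {k L : Type*} [Field k] [CommRing L]
    [Algebra k L] {t : Fin 3 → L} (ht : AlgebraicIndependent k t) :
    t 2 - t 0 ^ 2 ≠ 0 ∧ t 2 ^ 3 - t 0 ^ 2 ≠ 0 ∧ t 2 - t 2 ^ 3 ≠ 0 := by
  have aeval_ne_zero (p : MvPolynomial (Fin 3) k) (hp : p ≠ 0) : aeval t p ≠ 0 := fun h ↦
    hp (ht.eq_zero_of_aeval_eq_zero p h)
  have h₁ := aeval_ne_zero (X 2 - X 0 ^ 2) ?_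
  have h₂ := aeval_ne_zero (X 2 ^ 3 - X 0 ^ 2) ?_
  have h₃ := aeval_ne_zero (X 2 - X 2 ^ 3) ?_
  · simp only [map_sub, map_pow, aeval_X] at h₁ h₂ h₃
    exact ⟨h₁, h₂, h₃⟩
  all_goals simp [sub_eq_zero, X, monomial_pow, Finsupp.single_eq_single_iff]

theorem algebraicIndependent_a3_b2_b3 :
    AlgebraicIndependent k ![a3 k, b2 k, b3 k] := by
  let t : Fin 3 → AlgebraicClosure (FractionRing (MvPolynomial (Fin 3) k)) :=
    fun i ↦ algebraMap (MvPolynomial (Fin 3) k) _ (X i)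
  have ht : AlgebraicIndependent k t :=
    (algebraicIndependent_X (Fin 3) k).map' (f := IsScalarTower.toAlgHom k _ _) <| by
      show Function.Injective (algebraMap _ _)
      rw [IsScalarTower.algebraMap_eq _ (FractionRing (MvPolynomial (Fin 3) k))]
      exact (algebraMap (FractionRing (MvPolynomial (Fin 3) k)) _).injective.comp
        (IsFractionRing.injective _ _)
  obtain ⟨h₁, h₂, h₃⟩ := ht.ratio_nondegenerate
  obtain ⟨P, hP, hx₁, hy₁, hα, hβ, hγ⟩ := exists_point_with_ratios k (β := t 1) h₁ h₂ h₃
  let φ := Ideal.Quotient.liftₐ (uenoIdeal k) (aeval P) hP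
  have hφ (i : Fin 6) : φ (Ideal.Quotient.mk _ (X i)) = P i := aeval_X P i
  let n : Fin 3 → UenoRing k :=
    ![Ideal.Quotient.mk _ (X 5), Ideal.Quotient.mk _ (X 2), Ideal.Quotient.mk _ (X 4)]
  let d : Fin 3 → UenoRing k :=
    ![Ideal.Quotient.mk _ (X 1), Ideal.Quotient.mk _ (X 0), Ideal.Quotient.mk _ (X 0)]
  have hd (i : Fin 3) : φ (d i) ≠ 0 := by fin_cases i <;> simpa [d, hφ]
  have hnd : (fun i ↦ φ (n i) / φ (d i)) = t := by
    funext i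
    fin_cases i <;> simpa [n, d, hφ]
  have hK : ![a3 k, b2 k, b3 k] = fun i ↦ algebraMap _ _ (n i) / algebraMap _ _ (d i) := by
    funext i
    fin_cases i <;> rfl
  rw [hK]
  exact algebraicIndependent_div_of_algHom φ n d hd (hnd ▸ ht)
end
end

section
/- Let k be a field of characteristic ≠ 2. Let F = k(α, b, β) be the rational function field in three variables over k (the fraction field of the polynomial ring k[α,b,β]). Then the element (α²·b·(1−b²) + b·β·(b²−β²)) / (β·(1−β²)) of F is not a square in F, i.e., there is no f ∈ F with f² equal to this element. -/
/-!
The variable `β` divides neither the numerator `N = α²b(1-b²) + bβ(b²-β²)` (set `β = 0`) nor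
`1 - β²`, so the element has `β`-adic valuation `-1`. A square has even valuation: writing a
square root in lowest terms `p / q`, the relation `p² β (1-β²) = N q²` forces `β ∣ q` and then
`β ∣ p`.
-/

open MvPolynomial

noncomputable section

/-- The rational function field `F = k(α, b, β)` in three variables over `k`,
with `α = X 0`, `b = X 1`, `β = X 2`. -/
abbrev RatFunc3 (k : Type*) [Field k] : Type _ := FractionRing (MvPolynomial (Fin 3) k)

/-- The image of the `i`-th variable in `F = k(α, b, β)`. -/
def mv3 (k : Type*) [Field k] (i : Fin 3) : RatFunc3 k :=
  algebraMap (MvPolynomial (Fin 3) k) (RatFunc3 k) (X i)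

theorem IsFractionRing.not_isSquare_div_prime_mul {A K : Type*} [CommRing A] [IsDomain A]
    [UniqueFactorizationMonoid A] [Field K] [Algebra A K] [IsFractionRing A K] {π a b : A}
    (hπ : Prime π) (ha : ¬ π ∣ a) (hb : ¬ π ∣ b) :
    ¬ IsSquare (algebraMap A K a / algebraMap A K (π * b)) := by
  rintro ⟨f, hf⟩
  set p := num A f
  set q : A := (den A f : A)
  have hb0 : b ≠ 0 := by rintro rfl; exact hb (dvd_zero π)
  have hq0 : algebraMap A K q ≠ 0 :=
    IsFractionRing.to_map_ne_zero_of_mem_nonZeroDivisors (den A f).2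
  have hπb : algebraMap A K (π * b) ≠ 0 := IsFractionRing.to_map_ne_zero_of_mem_nonZeroDivisors
    (mem_nonZeroDivisors_of_ne_zero (mul_ne_zero hπ.ne_zero hb0))
  have hpq : p ^ 2 * (π * b) = a * q ^ 2 := by
    apply IsFractionRing.injective A K
    rw [← mk'_num_den' A f, div_mul_div_comm, div_eq_div_iff hπb (mul_ne_zero hq0 hq0)] at hf
    simp only [map_mul, map_pow] at hf ⊢
    linear_combination -hf
  obtain ⟨r, hr⟩ : π ∣ q := hπ.dvd_of_dvd_pow <| (hπ.dvd_mul.mp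
    (hpq ▸ (dvd_mul_right π b).mul_left _)).resolve_left ha
  have hpr : p ^ 2 * b = π * (a * r ^ 2) := by
    apply mul_left_cancel₀ hπ.ne_zero
    rw [hr] at hpq
    linear_combination hpq
  have hπp : π ∣ p :=
    hπ.dvd_of_dvd_pow <| (hπ.dvd_mul.mp (hpr ▸ dvd_mul_right π _)).resolve_right hb
  exact hπ.not_isUnit (num_den_reduced A f hπp ⟨r, hr⟩)

theorem MvPolynomial.not_X_dvd_of_aeval_update_ne_zero {σ R : Type*} [CommRing R]
    [DecidableEq σ] {i : σ} {p : MvPolynomial σ R}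
    (hp : aeval (Function.update (X : σ → MvPolynomial σ R) i 0) p ≠ 0) : ¬ X i ∣ p := by
  rintro ⟨c, rfl⟩
  simp at hp

theorem rhs_not_a_square_general (k : Type*) [Field k] :
    ¬ ∃ f : RatFunc3 k,
      f ^ 2 =
        (mv3 k 0 ^ 2 * mv3 k 1 * (1 - mv3 k 1 ^ 2) +
            mv3 k 1 * mv3 k 2 * (mv3 k 1 ^ 2 - mv3 k 2 ^ 2)) /
          (mv3 k 2 * (1 - mv3 k 2 ^ 2)) := by
  rintro ⟨f, hf⟩
  have hone_sub : (1 - X 1 ^ 2 : MvPolynomial (Fin 3) k) ≠ 0 := fun h => by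
    simpa using congrArg constantCoeff h
  have hnum : ¬ (X 2 : MvPolynomial (Fin 3) k) ∣
      X 0 ^ 2 * X 1 * (1 - X 1 ^ 2) + X 1 * X 2 * (X 1 ^ 2 - X 2 ^ 2) :=
    not_X_dvd_of_aeval_update_ne_zero (by simpa [X_ne_zero] using hone_sub)
  have hden : ¬ (X 2 : MvPolynomial (Fin 3) k) ∣ 1 - X 2 ^ 2 :=
    not_X_dvd_of_aeval_update_ne_zero (by simp)
  refine IsFractionRing.not_isSquare_div_prime_mul X_prime hnum hden ⟨f, ?_⟩
  simpa [mv3, sq] using hf.symm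

set_option synthInstance.maxHeartbeats 1000000 in
/-- The element `(α²b(1-b²) + bβ(b²-β²)) / (β(1-β²))` of the rational function field
`F = k(α, b, β)` is not a square in `F` (claim in the proof of Proposition 2.5). -/
theorem rhs_not_a_square (k : Type*) [Field k] (h2 : (2 : k) ≠ 0) :
    ¬ ∃ f : RatFunc3 k,
      f ^ 2 =
        (mv3 k 0 ^ 2 * mv3 k 1 * (1 - mv3 k 1 ^ 2) +
            mv3 k 1 * mv3 k 2 * (mv3 k 1 ^ 2 - mv3 k 2 ^ 2)) /
          (mv3 k 2 * (1 - mv3 k 2 ^ 2)) :=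
  rhs_not_a_square_general k
end
end

section
/- Let k be a field of characteristic ≠ 2. Then the polynomial f = a²·β·(1−β²) − α²·b·(1−b²) − b·β·(b²−β²) is irreducible in the polynomial ring k[a, α, b, β] in four variables. -/
/-!
Viewed as a polynomial in `a` over `k[α, b, β]`, `f = (β - β³) a² + b w` with
`w = α²(b² - 1) + β(β² - b²)`. Neither `β - β³` nor `w` is divisible by `b` (set `b = 0`),
so `f` is Eisenstein at the prime `b`. It is primitive because `β - β³` and `b w` have no
common non-unit factor: a divisor of `β - β³` involves only `β`, and the coefficient of
`α² b` in `b w` is `-1`.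
-/

open MvPolynomial

namespace Polynomial

variable {R : Type*}

theorem isPrimitive_of_isRelPrime_coeff [CommSemiring R] {p : R[X]} (i j : ℕ)
    (h : IsRelPrime (p.coeff i) (p.coeff j)) : p.IsPrimitive := fun r hr =>
  h ((C_dvd_iff_dvd_coeff r p).1 hr i) ((C_dvd_iff_dvd_coeff r p).1 hr j)

variable [CommRing R] [IsDomain R]

theorem isRelPrime_C_of_isRelPrime_coeff {a : R} {p : R[X]} (ha : a ≠ 0) (n : ℕ)
    (h : IsRelPrime a (p.coeff n)) : IsRelPrime (C a) p := by
  intro r hra hrp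
  have hr : r.natDegree = 0 := by
    simpa using natDegree_le_of_dvd hra (C_ne_zero.2 ha)
  rw [eq_C_of_natDegree_eq_zero hr, C_dvd_iff_dvd_coeff] at hra hrp
  rw [eq_C_of_natDegree_eq_zero hr]
  exact isUnit_C.2 (h (by simpa using hra 0) (hrp n))

theorem irreducible_C_mul_X_pow_add_C_mul {c e π : R} {n : ℕ} (hn : n ≠ 0) (hπ : Prime π)
    (hc : ¬π ∣ c) (he : ¬π ∣ e) (hce : IsRelPrime c (π * e)) :
    Irreducible (C c * X ^ n + C (π * e)) := by
  have hc0 : c ≠ 0 := by rintro rfl; exact hc (dvd_zero π)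
  have hdeg : (C c * X ^ n + C (π * e)).natDegree = n := by
    compute_degree!
    simpa [hn] using hc0
  have hprime : (Ideal.span {π}).IsPrime := (Ideal.span_singleton_prime hπ.ne_zero).2 hπ
  refine IsEisensteinAt.irreducible ⟨?leading, fun {m} hm => ?mem, ?notMem⟩ hprime
    (isPrimitive_of_isRelPrime_coeff n 0 (by simpa [coeff_C, hn, Ne.symm hn] using hce))
    (by rw [hdeg]; exact Nat.pos_of_ne_zero hn)
  case leading =>
    rw [leadingCoeff, hdeg]
    simpa [coeff_C, hn, Ideal.mem_span_singleton] using hc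
  case mem =>
    rw [hdeg] at hm
    simp only [coeff_add, coeff_C_mul_X_pow, coeff_C, if_neg hm.ne, zero_add,
      Ideal.mem_span_singleton]
    split_ifs <;> simp
  case notMem =>
    rw [Ideal.span_singleton_pow, Ideal.mem_span_singleton, pow_two]
    simpa [coeff_C, Ne.symm hn, mul_dvd_mul_iff_left hπ.ne_zero] using he

end Polynomial

namespace MvPolynomial

theorem aeval_eq_zero_of_X_dvd {σ R S : Type*} [CommSemiring R] [CommSemiring S] [Algebra R S]
    {i : σ} {p : MvPolynomial σ R} (h : X i ∣ p) {v : σ → S} (hv : v i = 0) :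
    aeval v p = 0 := by
  obtain ⟨q, rfl⟩ := h
  simp [hv]

theorem isRelPrime_of_finSuccEquiv_eq_C {R : Type*} [CommRing R] [IsDomain R] {n : ℕ}
    {p q : MvPolynomial (Fin (n + 1)) R} {a : MvPolynomial (Fin n) R} (ha : a ≠ 0)
    (hp : finSuccEquiv R n p = Polynomial.C a) (m : ℕ)
    (h : IsRelPrime a ((finSuccEquiv R n q).coeff m)) : IsRelPrime p q :=
  IsRelPrime.of_map (finSuccEquiv R n) (hp ▸ Polynomial.isRelPrime_C_of_isRelPrime_coeff ha m h)

theorem X_sub_X_pow_three_ne_zero {σ R : Type*} [CommRing R] [Nontrivial R] (i : σ) :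
    (X i - X i ^ 3 : MvPolynomial σ R) ≠ 0 := by
  intro h
  have := congrArg (aeval fun _ => (Polynomial.X : Polynomial R)) h
  simpa using congrArg (Polynomial.coeff · 1) this

end MvPolynomial

namespace Hypersurface

variable (k : Type*) [CommRing k]

/-- In the variables `(α, b, β) = (X 0, X 1, X 2)`, the polynomial of the theorem is
`aCoeff · a² + b · bCofactor`. -/
noncomputable def aCoeff : MvPolynomial (Fin 3) k := X 2 - X 2 ^ 3

noncomputable def bCofactor : MvPolynomial (Fin 3) k :=
  X 0 ^ 2 * (X 1 ^ 2 - 1) + X 2 * (X 2 ^ 2 - X 1 ^ 2)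

variable {k}

theorem finSuccEquiv_eq :
    finSuccEquiv k 3 (X 0 ^ 2 * X 3 * (1 - X 3 ^ 2) - X 1 ^ 2 * X 2 * (1 - X 2 ^ 2) -
        X 2 * X 3 * (X 2 ^ 2 - X 3 ^ 2))
      = Polynomial.C (aCoeff k) * Polynomial.X ^ 2 + Polynomial.C (X 1 * bCofactor k) := by
  have e₁ : finSuccEquiv k 3 (X 1) = Polynomial.C (X 0) := finSuccEquiv_X_succ (j := 0)
  have e₂ : finSuccEquiv k 3 (X 2) = Polynomial.C (X 1) := finSuccEquiv_X_succ (j := 1)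
  have e₃ : finSuccEquiv k 3 (X 3) = Polynomial.C (X 2) := finSuccEquiv_X_succ (j := 2)
  simp only [aCoeff, bCofactor, map_mul, map_add, map_sub, map_pow, map_one, e₁, e₂, e₃,
    finSuccEquiv_X_zero]
  ring

variable [IsDomain k]

theorem not_X_one_dvd_aCoeff : ¬ X 1 ∣ aCoeff k := fun h => by
  have := aeval_eq_zero_of_X_dvd h (v := ![0, 0, (X 0 : MvPolynomial (Fin 1) k)]) (by simp)
  exact X_sub_X_pow_three_ne_zero (R := k) (0 : Fin 1) (by simpa [aCoeff] using this)

theorem not_X_one_dvd_bCofactor : ¬ X 1 ∣ bCofactor k := fun h => by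
  simpa [bCofactor] using
    aeval_eq_zero_of_X_dvd h (v := ![0, 0, (X 0 : MvPolynomial (Fin 1) k)]) (by simp)

theorem isRelPrime_aCoeff_X_one_mul_bCofactor : IsRelPrime (aCoeff k) (X 1 * bCofactor k) := by
  have e₁ : finSuccEquiv k 1 (X 1) = Polynomial.C (X 0) := finSuccEquiv_X_succ (j := 0)
  have e₂₁ : finSuccEquiv k 2 (X 1) = Polynomial.C (X 0) := finSuccEquiv_X_succ (j := 0)
  have e₂₂ : finSuccEquiv k 2 (X 2) = Polynomial.C (X 1) := finSuccEquiv_X_succ (j := 1)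
  have hsplit : finSuccEquiv k 2 (X 1 * bCofactor k)
      = Polynomial.C (X 0 * (X 0 ^ 2 - 1)) * Polynomial.X ^ 2
        + Polynomial.C (X 0 * X 1 * (X 1 ^ 2 - X 0 ^ 2)) := by
    simp only [bCofactor, map_mul, map_add, map_sub, map_pow, map_one, e₂₁, e₂₂,
      finSuccEquiv_X_zero]
    ring
  -- in `k[b, β]`: the coefficient of `b` in `b (b² - 1)` is the unit `-1`
  have hbβ : IsRelPrime (X 1 - X 1 ^ 3 : MvPolynomial (Fin 2) k) (X 0 * (X 0 ^ 2 - 1)) :=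
    isRelPrime_of_finSuccEquiv_eq_C (X_sub_X_pow_three_ne_zero 0) (by simp [e₁]) 1
      (by simpa [finSuccEquiv_X_zero] using isUnit_one.neg.isRelPrime_right)
  refine isRelPrime_of_finSuccEquiv_eq_C (X_sub_X_pow_three_ne_zero 1)
    (by simp [aCoeff, e₂₂]) 2 ?_
  rwa [hsplit, Polynomial.coeff_add, Polynomial.coeff_C_mul_X_pow, Polynomial.coeff_C,
    if_pos rfl, if_neg two_ne_zero, add_zero]

end Hypersurface

theorem hypersurface_polynomial_irreducible_general (k : Type*) [Field k] :
    Irreducible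
      (X 0 ^ 2 * X 3 * (1 - X 3 ^ 2) - X 1 ^ 2 * X 2 * (1 - X 2 ^ 2) -
        X 2 * X 3 * (X 2 ^ 2 - X 3 ^ 2) : MvPolynomial (Fin 4) k) := by
  refine Irreducible.of_map (f := finSuccEquiv k 3) ?_
  rw [Hypersurface.finSuccEquiv_eq]
  exact Polynomial.irreducible_C_mul_X_pow_add_C_mul two_ne_zero X_prime
    Hypersurface.not_X_one_dvd_aCoeff Hypersurface.not_X_one_dvd_bCofactor
    Hypersurface.isRelPrime_aCoeff_X_one_mul_bCofactor

/-- The defining polynomial `a²β(1-β²) - α²b(1-b²) - bβ(b²-β²)` of the hypersurface `H`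
of Proposition 2.5 is irreducible in `k[a, α, b, β]` for any field `k` of characteristic ≠ 2.
Variables: `a = X 0`, `α = X 1`, `b = X 2`, `β = X 3`. -/
theorem hypersurface_polynomial_irreducible (k : Type*) [Field k] (h2 : (2 : k) ≠ 0) :
    Irreducible
      (X 0 ^ 2 * X 3 * (1 - X 3 ^ 2) - X 1 ^ 2 * X 2 * (1 - X 2 ^ 2) -
        X 2 * X 3 * (X 2 ^ 2 - X 3 ^ 2) : MvPolynomial (Fin 4) k) :=
  hypersurface_polynomial_irreducible_general k
end

section
/- Let k be a field of characteristic ≠ 2, and let P, Q, R be polynomials in the polynomial ring k[b, β] in two variables satisfying the identity P²·β·(1−β²) = R²·b·(1−b²) + Q²·b·β·(b²−β²) in k[b,β]. Then the product b·β divides each of P, Q, and R in k[b,β]. In particular, if P, Q, R have no nonconstant common factor, then P = Q = R = 0. -/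
/-!
Write `b = X 0`, `β = X 1`. Divisibility by the prime `X i` is detected by substituting
`X i = 0`. Setting `b = 0` in the identity leaves `P(0, β)² β (1 - β²) = 0`, so `b ∣ P`;
symmetrically `β ∣ R`. Cancelling `bβ` gives
`b P₁² (1 - β²) = β R₁² (1 - b²) + Q² (b² - β²)`, and setting `b = 0` there gives
`R₁(0, β)² = β Q(0, β)²`, which forces both sides to vanish since the `β`-degree is even on the
left and odd on the right. Hence `b ∣ R₁` and `b ∣ Q`, and symmetrically `β ∣ P₁` and `β ∣ Q`.
Since `bβ` is a nonunit common factor, the coprimality hypothesis of the last clause never holds.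
-/

namespace MvPolynomial

variable {σ R : Type*} [CommRing R]

section substZero

variable [DecidableEq σ]

noncomputable def substZero (i : σ) : MvPolynomial σ R →ₐ[R] MvPolynomial σ R :=
  aeval (Function.update X i 0)

@[simp]
lemma substZero_X_self (i : σ) : substZero i (X i : MvPolynomial σ R) = 0 := by
  simp [substZero]

@[simp]
lemma substZero_X_of_ne {i j : σ} (h : j ≠ i) : substZero i (X j : MvPolynomial σ R) = X j := by
  simp [substZero, h]

lemma X_dvd_sub_substZero (i : σ) (p : MvPolynomial σ R) : X i ∣ p - substZero i p := by
  induction p using induction_on with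
  | C a => simp [substZero]
  | add p q hp hq => simpa [sub_add_sub_comm] using dvd_add hp hq
  | mul_X p j hp =>
    have hj : X i ∣ X j - substZero i (X j : MvPolynomial σ R) := by
      obtain rfl | h := eq_or_ne j i
      · simp
      · simp [h]
    rw [map_mul, show p * X j - substZero i p * substZero i (X j) =
      (p - substZero i p) * X j + substZero i p * (X j - substZero i (X j)) by ring]
    exact dvd_add (hp.mul_right _) (hj.mul_left _)

lemma X_dvd_iff_substZero_eq_zero {i : σ} {p : MvPolynomial σ R} :
    X i ∣ p ↔ substZero i p = 0 := by
  refine ⟨fun ⟨q, hq⟩ => by simp [hq], fun h => ?_⟩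
  simpa [h] using X_dvd_sub_substZero i p

end substZero

lemma one_sub_X_sq_ne_zero [Nontrivial R] (i : σ) : (1 - X i ^ 2 : MvPolynomial σ R) ≠ 0 :=
  fun h => by simpa using congrArg constantCoeff h

variable [IsDomain R]

lemma X_mul_X_dvd_iff {i j : σ} (hij : i ≠ j) {p : MvPolynomial σ R} :
    X i * X j ∣ p ↔ X i ∣ p ∧ X j ∣ p := by
  refine ⟨fun h => ⟨dvd_of_mul_right_dvd h, dvd_of_mul_left_dvd h⟩, ?_⟩
  rintro ⟨⟨q, rfl⟩, hj⟩
  exact mul_dvd_mul_left _ <| (X_prime.dvd_or_dvd hj).resolve_left (by simpa using hij.symm)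

lemma sq_eq_X_mul_sq_iff {i : σ} {r q : MvPolynomial σ R} :
    r ^ 2 = X i * q ^ 2 ↔ r = 0 ∧ q = 0 := by
  refine ⟨fun h => ?_, fun ⟨hr, hq⟩ => by simp [hr, hq]⟩
  by_contra hrq
  have hq : q ≠ 0 := fun hq => hrq ⟨by simpa [hq] using h, hq⟩
  have hr : r ≠ 0 := fun hr => by simp [hr, X_ne_zero, hq] at h
  have := congrArg (degreeOf i) h
  rw [degreeOf_pow_eq i r 2 hr, degreeOf_mul_eq (X_ne_zero i) (pow_ne_zero 2 hq),
    degreeOf_pow_eq i q 2 hq, degreeOf_X_self] at this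
  omega

variable [DecidableEq σ]

lemma X_dvd_of_conic {i j : σ} (hij : i ≠ j) {p q r : MvPolynomial σ R}
    (h : p ^ 2 * X j * (1 - X j ^ 2) =
      r ^ 2 * X i * (1 - X i ^ 2) + q ^ 2 * X i * X j * (X i ^ 2 - X j ^ 2)) :
    X i ∣ p := by
  refine X_dvd_iff_substZero_eq_zero.2 ?_
  simpa [hij.symm, X_ne_zero, one_sub_X_sq_ne_zero] using congrArg (substZero i) h

lemma X_dvd_of_reduced_conic {i j : σ} (hij : i ≠ j) {p q r : MvPolynomial σ R}
    (h : X i * p ^ 2 * (1 - X j ^ 2) = X j * r ^ 2 * (1 - X i ^ 2) + q ^ 2 * (X i ^ 2 - X j ^ 2)) :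
    X i ∣ r ∧ X i ∣ q := by
  have := congrArg (substZero i) h
  simp only [map_add, map_sub, map_mul, map_pow, map_one, substZero_X_self,
    substZero_X_of_ne hij.symm] at this
  have hsq : substZero i r ^ 2 = X j * substZero i q ^ 2 :=
    mul_left_cancel₀ (X_ne_zero j) (by linear_combination -this)
  simpa only [X_dvd_iff_substZero_eq_zero] using sq_eq_X_mul_sq_iff.1 hsq

end MvPolynomial

open MvPolynomial

theorem divisibility_descent_general (k : Type*) [Field k]
    (P Q R : MvPolynomial (Fin 2) k)
    (hrel : P ^ 2 * X 1 * (1 - X 1 ^ 2) =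
      R ^ 2 * X 0 * (1 - X 0 ^ 2) + Q ^ 2 * X 0 * X 1 * (X 0 ^ 2 - X 1 ^ 2)) :
    (X 0 * X 1 ∣ P) ∧ (X 0 * X 1 ∣ Q) ∧ (X 0 * X 1 ∣ R) ∧
    ((∀ d : MvPolynomial (Fin 2) k, d ∣ P → d ∣ Q → d ∣ R → IsUnit d) →
      P = 0 ∧ Q = 0 ∧ R = 0) := by
  have h01 : (0 : Fin 2) ≠ 1 := by decide
  obtain ⟨P₁, rfl⟩ := X_dvd_of_conic h01 hrel
  obtain ⟨R₁, rfl⟩ := X_dvd_of_conic h01.symm (p := R) (q := Q) (r := X 0 * P₁)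
    (by linear_combination -hrel)
  have hred : X 0 * P₁ ^ 2 * (1 - X 1 ^ 2) =
      X 1 * R₁ ^ 2 * (1 - X 0 ^ 2) + Q ^ 2 * (X 0 ^ 2 - X 1 ^ 2) :=
    mul_left_cancel₀ (mul_ne_zero (X_ne_zero 0) (X_ne_zero 1)) (by linear_combination hrel)
  obtain ⟨hR₁, hQ₀⟩ := X_dvd_of_reduced_conic h01 hred
  obtain ⟨hP₁, hQ₁⟩ := X_dvd_of_reduced_conic h01.symm (p := R₁) (q := Q) (r := P₁)
    (by linear_combination -hred)
  have hP : X 0 * X 1 ∣ X 0 * P₁ := mul_dvd_mul_left _ hP₁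
  have hQ : X 0 * X 1 ∣ Q := (X_mul_X_dvd_iff h01).2 ⟨hQ₀, hQ₁⟩
  have hR : X 0 * X 1 ∣ X 1 * R₁ := mul_comm R₁ (X 1) ▸ mul_dvd_mul hR₁ dvd_rfl
  exact ⟨hP, hQ, hR, fun hcop =>
    absurd (isUnit_of_mul_isUnit_left (hcop _ hP hQ hR)) X_prime.not_isUnit⟩

/-- The divisibility descent in the proof of Remark 2.7: if `P, Q, R ∈ k[b, β]`
(`char k ≠ 2`, `b = X 0`, `β = X 1`) satisfy
`P²β(1-β²) = R²b(1-b²) + Q²bβ(b²-β²)`, then `bβ` divides each of `P`, `Q`, `R`;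
in particular, if `P, Q, R` have no nonconstant common factor then `P = Q = R = 0`. -/
theorem divisibility_descent (k : Type*) [Field k] (h2 : (2 : k) ≠ 0)
    (P Q R : MvPolynomial (Fin 2) k)
    (hrel : P ^ 2 * X 1 * (1 - X 1 ^ 2) =
      R ^ 2 * X 0 * (1 - X 0 ^ 2) + Q ^ 2 * X 0 * X 1 * (X 0 ^ 2 - X 1 ^ 2)) :
    (X 0 * X 1 ∣ P) ∧ (X 0 * X 1 ∣ Q) ∧ (X 0 * X 1 ∣ R) ∧
    ((∀ d : MvPolynomial (Fin 2) k, d ∣ P → d ∣ Q → d ∣ R → IsUnit d) →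
      P = 0 ∧ Q = 0 ∧ R = 0) :=
  divisibility_descent_general k P Q R hrel
end

section
/- Let k be a field of characteristic ≠ 2 containing an element ζ with ζ² = −1. Let F = k(s, t) be the rational function field in two variables over k, and let F(v) be the rational function field in one variable v over F. Then there exist elements a, α ∈ F(v) satisfying a²·t²·(1−t⁴) = α²·s²·(1−s⁴) + s²·t²·(s⁴−t⁴) such that the subfield F(a, α) of F(v) generated by a and α over F equals all of F(v). In other words, the conic a²t²(1−t⁴) = α²s²(1−s⁴) + s²t²(s⁴−t⁴) over F = k(s,t) has an F-rational point (e.g. (a,α) = (s,t)) and its function field is F-isomorphic to the rational function field F(v). -/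
/-!
The conic `a² T = α² S + C` (with `S = s²(1 - s⁴)`, `T = t²(1 - t⁴)`) has the `F`-point
`(s, t)`. Away from characteristic 2, the line of slope `v` through it meets the conic in exactly
one more point `(a, α)`, whose coordinates are rational functions of `v`; conversely
`v = (α - t) / (a - s)`. So for `v` transcendental over `F`, `F(a, α) = F(v)`.
-/

open MvPolynomial

noncomputable section

/-- The rational function field `F = k(s, t)` in two variables over `k`,
with `s = X 0`, `t = X 1`. -/
abbrev RatFunc2 (k : Type*) [Field k] : Type _ := FractionRing (MvPolynomial (Fin 2) k)

/-- The image of the `i`-th variable in `F = k(s, t)`. -/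
def mv2 (k : Type*) [Field k] (i : Fin 2) : RatFunc2 k :=
  algebraMap (MvPolynomial (Fin 2) k) (RatFunc2 k) (X i)

/-- The images of `s`, `t` in the rational function field `F(v)` in one variable over
`F = k(s, t)`. -/
def mv2' (k : Type*) [Field k] (i : Fin 2) : RatFunc (RatFunc2 k) :=
  algebraMap (RatFunc2 k) (RatFunc (RatFunc2 k)) (mv2 k i)

open IntermediateField hiding algebraMap_mem

section Conic

variable {K L : Type*} [Field K] [Field L] [Algebra K L] {v : L}

theorem Transcendental.algebraMap_mul_sub_ne_zero (hv : Transcendental K v) {b : K}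
    (hb : b ≠ 0) (c : K) : algebraMap K L b * v - algebraMap K L c ≠ 0 := by
  have hp : Polynomial.C b * Polynomial.X - Polynomial.C c ≠ 0 := fun h ↦
    hb (by simpa using congrArg (Polynomial.coeff · 1) h)
  simpa using mt (transcendental_iff.mp hv _) hp

theorem Transcendental.algebraMap_sub_mul_sq_ne_zero (hv : Transcendental K v) {b : K}
    (hb : b ≠ 0) (c : K) : algebraMap K L c - algebraMap K L b * v ^ 2 ≠ 0 := by
  have hp : Polynomial.C c - Polynomial.C b * Polynomial.X ^ 2 ≠ 0 := fun h ↦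
    hb (by simpa using congrArg (Polynomial.coeff · 2) h)
  simpa using mt (transcendental_iff.mp hv _) hp

theorem exists_mem_conic_adjoin_eq_adjoin_simple (h2 : (2 : K) ≠ 0) {A B C x₀ y₀ : K}
    (hB : B ≠ 0) (hy₀ : y₀ ≠ 0) (h₀ : x₀ ^ 2 * A = y₀ ^ 2 * B + C)
    (hv : Transcendental K v) :
    ∃ a α : L, a ^ 2 * algebraMap K L A = α ^ 2 * algebraMap K L B + algebraMap K L C ∧
      K⟮a, α⟯ = K⟮v⟯ := by
  set φ := algebraMap K L
  have hden := hv.algebraMap_sub_mul_sq_ne_zero hB A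
  have hnum := hv.algebraMap_mul_sub_ne_zero (mul_ne_zero hB hy₀) (A * x₀)
  -- substituting `(x₀ + u, y₀ + v u)` into the conic and cancelling one factor `u` gives `u`
  set u := 2 * (φ (B * y₀) * v - φ (A * x₀)) / (φ A - φ B * v ^ 2)
  have h2L : (2 : L) ≠ 0 := map_ofNat φ 2 ▸ (map_ne_zero φ).mpr h2
  have hu : u ≠ 0 := div_ne_zero (mul_ne_zero h2L hnum) hden
  have hu_den : u * (φ A - φ B * v ^ 2) = 2 * (φ (B * y₀) * v - φ (A * x₀)) :=
    div_mul_cancel₀ _ hden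
  refine ⟨φ x₀ + u, φ y₀ + v * u, ?_, le_antisymm ?_ ?_⟩
  · have h₀' := congrArg φ h₀
    simp only [map_add, map_mul, map_pow] at h₀' hu_den
    linear_combination h₀' + u * hu_den
  · have hvE : v ∈ K⟮v⟯ := mem_adjoin_simple_self K v
    have huE : u ∈ K⟮v⟯ :=
      div_mem (mul_mem (ofNat_mem _ 2) (sub_mem (mul_mem (algebraMap_mem _ _) hvE)
        (algebraMap_mem _ _))) (sub_mem (algebraMap_mem _ _)
          (mul_mem (algebraMap_mem _ _) (pow_mem hvE 2)))
    rw [adjoin_le_iff, Set.insert_subset_iff, Set.singleton_subset_iff]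
    exact ⟨add_mem (algebraMap_mem _ _) huE, add_mem (algebraMap_mem _ _) (mul_mem hvE huE)⟩
  · rw [adjoin_simple_le_iff]
    have hslope :
        (φ y₀ + v * u - φ y₀) / (φ x₀ + u - φ x₀) ∈ K⟮φ x₀ + u, φ y₀ + v * u⟯ :=
      div_mem (sub_mem (subset_adjoin _ _ (Set.mem_insert_of_mem _ rfl)) (algebraMap_mem _ _))
        (sub_mem (subset_adjoin _ _ (Set.mem_insert _ _)) (algebraMap_mem _ _))
    rwa [add_sub_cancel_left, add_sub_cancel_left, mul_div_cancel_right₀ _ hu] at hslope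

end Conic

section RatFunc2

variable {k : Type*} [Field k]

theorem mv2_ne_zero (i : Fin 2) : mv2 k i ≠ 0 :=
  (map_ne_zero_iff _ (IsFractionRing.injective _ _)).mpr (X_ne_zero i)

theorem one_sub_mv2_pow_ne_zero (i : Fin 2) {n : ℕ} (hn : n ≠ 0) : 1 - mv2 k i ^ n ≠ 0 := by
  have hp : (1 - X i ^ n : MvPolynomial (Fin 2) k) ≠ 0 := fun h ↦ by
    simpa [hn] using congrArg (MvPolynomial.eval 0) h
  simpa [mv2] using (map_ne_zero_iff _ (IsFractionRing.injective _ (RatFunc2 k))).mpr hp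

end RatFunc2

set_option synthInstance.maxHeartbeats 1000000 in
theorem conic_rational_point_and_rational_general (k : Type*) [Field k] (h2 : (2 : k) ≠ 0) :
    (mv2 k 0 ^ 2 * mv2 k 1 ^ 2 * (1 - mv2 k 1 ^ 4) =
      mv2 k 1 ^ 2 * mv2 k 0 ^ 2 * (1 - mv2 k 0 ^ 4) +
        mv2 k 0 ^ 2 * mv2 k 1 ^ 2 * (mv2 k 0 ^ 4 - mv2 k 1 ^ 4)) ∧
    ∃ a α : RatFunc (RatFunc2 k),
      a ^ 2 * mv2' k 1 ^ 2 * (1 - mv2' k 1 ^ 4) =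
        α ^ 2 * mv2' k 0 ^ 2 * (1 - mv2' k 0 ^ 4) +
          mv2' k 0 ^ 2 * mv2' k 1 ^ 2 * (mv2' k 0 ^ 4 - mv2' k 1 ^ 4) ∧
      IntermediateField.adjoin (RatFunc2 k) ({a, α} : Set (RatFunc (RatFunc2 k))) = ⊤ := by
  set s := mv2 k 0
  set t := mv2 k 1
  have hpoint : s ^ 2 * (t ^ 2 * (1 - t ^ 4)) =
      t ^ 2 * (s ^ 2 * (1 - s ^ 4)) + s ^ 2 * t ^ 2 * (s ^ 4 - t ^ 4) := by ring
  have h2F : (2 : RatFunc2 k) ≠ 0 :=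
    map_ofNat (algebraMap k (RatFunc2 k)) 2 ▸ (map_ne_zero _).mpr h2
  have hS : s ^ 2 * (1 - s ^ 4) ≠ 0 :=
    mul_ne_zero (pow_ne_zero 2 (mv2_ne_zero 0)) (one_sub_mv2_pow_ne_zero 0 four_ne_zero)
  obtain ⟨a, α, hconic, hadjoin⟩ := exists_mem_conic_adjoin_eq_adjoin_simple h2F hS
    (mv2_ne_zero 1) hpoint RatFunc.transcendental_X
  refine ⟨by linear_combination hpoint, a, α, ?_, hadjoin.trans RatFunc.adjoin_X⟩
  simp only [map_mul, map_pow, map_sub, map_one] at hconic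
  simp only [mv2']
  linear_combination hconic

set_option synthInstance.maxHeartbeats 1000000 in
/-- **Key step of Corollary 2.8**: over `F = k(s, t)` (`char k ≠ 2`, `ζ² = -1` in `k`),
the conic `a²t²(1-t⁴) = α²s²(1-s⁴) + s²t²(s⁴-t⁴)` has the `F`-rational point
`(a, α) = (s, t)`, and its function field is `F`-isomorphic to the rational function
field `F(v)`: there exist `a, α ∈ F(v)` satisfying the equation with `F(a, α) = F(v)`. -/
theorem conic_rational_point_and_rational (k : Type*) [Field k] (h2 : (2 : k) ≠ 0)
    (ζ : k) (hζ : ζ ^ 2 = -1) :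
    (mv2 k 0 ^ 2 * mv2 k 1 ^ 2 * (1 - mv2 k 1 ^ 4) =
      mv2 k 1 ^ 2 * mv2 k 0 ^ 2 * (1 - mv2 k 0 ^ 4) +
        mv2 k 0 ^ 2 * mv2 k 1 ^ 2 * (mv2 k 0 ^ 4 - mv2 k 1 ^ 4)) ∧
    ∃ a α : RatFunc (RatFunc2 k),
      a ^ 2 * mv2' k 1 ^ 2 * (1 - mv2' k 1 ^ 4) =
        α ^ 2 * mv2' k 0 ^ 2 * (1 - mv2' k 0 ^ 4) +
          mv2' k 0 ^ 2 * mv2' k 1 ^ 2 * (mv2' k 0 ^ 4 - mv2' k 1 ^ 4) ∧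
      IntermediateField.adjoin (RatFunc2 k) ({a, α} : Set (RatFunc (RatFunc2 k))) = ⊤ :=
  conic_rational_point_and_rational_general k h2
end
end
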